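/- arXiv:2410.09270 — 4 statements merged into one kernel-verified Lean document; each statement's English description precedes it below -/
import Mathlib

section
/- The point $[1:1:1:1] \in \mathbb{P}^3(\mathbb{C})$ is the unique point of $\mathbb{P}^3$ fixed by the full permutation action of $S_4$ on homogeneous coordinates, and no point of $\mathbb{P}^3$ has stabilizer exactly equal to the alternating group $A_4$. -/
open scoped LinearAlgebra.Projectivization
open Projectivization

/-- The action of a permutation `σ ∈ S₄` on `ℙ³(ℂ)` by permuting homogeneous
coordinates. -/
noncomputable def permAct (σ : Equiv.Perm (Fin 4)) :
    ℙ ℂ (Fin 4 → ℂ) → ℙ ℂ (Fin 4 → ℂ) :=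
  Projectivization.map (LinearMap.funLeft ℂ ℂ σ)
    (LinearMap.funLeft_injective_of_surjective ℂ ℂ σ σ.surjective)

lemma permAct_mk (σ : Equiv.Perm (Fin 4)) (v : Fin 4 → ℂ) (hv : v ≠ 0) :
    permAct σ (Projectivization.mk ℂ v hv) =
      Projectivization.mk ℂ (fun m => v (σ m))
        (by
          intro h
          obtain ⟨a, ha⟩ := Function.ne_iff.1 hv
          exact ha (by simpa using congrFun h (σ.symm a))) := by
  unfold permAct
  rw [Projectivization.map_mk]
  rfl

lemma mem4 : ∀ (a i j k m : Fin 4), a ≠ i → a ≠ j → a ≠ k → i ≠ j → i ≠ k → j ≠ k →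
    m = a ∨ m = i ∨ m = j ∨ m = k := by decide

lemma aux_const (v : Fin 4 → ℂ)
    (Q : ∀ σ : Equiv.Perm (Fin 4), Equiv.Perm.sign σ = 1 →
      ∃ c : ℂ, c ≠ 0 ∧ ∀ m, v (σ m) = c * v m)
    (a i j k : Fin 4) (hai : a ≠ i) (haj : a ≠ j) (hak : a ≠ k)
    (hij : i ≠ j) (hik : i ≠ k) (hjk : j ≠ k) (ha : v a ≠ 0) :
    ∀ m, v m = v a := by
  obtain ⟨c1, hc1, h1⟩ := Q (Equiv.swap i j * Equiv.swap j k)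
    (by rw [map_mul, Equiv.Perm.sign_swap hij, Equiv.Perm.sign_swap hjk]; decide)
  have s1a : (Equiv.swap i j * Equiv.swap j k) a = a := by
    rw [Equiv.Perm.mul_apply, Equiv.swap_apply_of_ne_of_ne haj hak,
      Equiv.swap_apply_of_ne_of_ne hai haj]
  have s1i : (Equiv.swap i j * Equiv.swap j k) i = j := by
    rw [Equiv.Perm.mul_apply, Equiv.swap_apply_of_ne_of_ne hij hik, Equiv.swap_apply_left]
  have s1j : (Equiv.swap i j * Equiv.swap j k) j = k := by
    rw [Equiv.Perm.mul_apply, Equiv.swap_apply_left,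
      Equiv.swap_apply_of_ne_of_ne (Ne.symm hik) (Ne.symm hjk)]
  have e1a : v a = c1 * v a := by have := h1 a; rw [s1a] at this; exact this
  have e1i : v j = c1 * v i := by have := h1 i; rw [s1i] at this; exact this
  have e1j : v k = c1 * v j := by have := h1 j; rw [s1j] at this; exact this
  have hc1' : c1 = 1 := mul_right_cancel₀ ha (by rw [one_mul, ← e1a])
  rw [hc1', one_mul] at e1i e1j
  obtain ⟨c2, hc2, h2⟩ := Q (Equiv.swap a i * Equiv.swap i j)
    (by rw [map_mul, Equiv.Perm.sign_swap hai, Equiv.Perm.sign_swap hij]; decide)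
  have s2a : (Equiv.swap a i * Equiv.swap i j) a = i := by
    rw [Equiv.Perm.mul_apply, Equiv.swap_apply_of_ne_of_ne hai haj, Equiv.swap_apply_left]
  have s2i : (Equiv.swap a i * Equiv.swap i j) i = j := by
    rw [Equiv.Perm.mul_apply, Equiv.swap_apply_left,
      Equiv.swap_apply_of_ne_of_ne (Ne.symm haj) (Ne.symm hij)]
  have s2j : (Equiv.swap a i * Equiv.swap i j) j = a := by
    rw [Equiv.Perm.mul_apply, Equiv.swap_apply_right, Equiv.swap_apply_right]
  have s2k : (Equiv.swap a i * Equiv.swap i j) k = k := by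
    rw [Equiv.Perm.mul_apply, Equiv.swap_apply_of_ne_of_ne (Ne.symm hik) (Ne.symm hjk),
      Equiv.swap_apply_of_ne_of_ne (Ne.symm hak) (Ne.symm hik)]
  have e2a : v i = c2 * v a := by have := h2 a; rw [s2a] at this; exact this
  have e2i : v j = c2 * v i := by have := h2 i; rw [s2i] at this; exact this
  have e2k : v k = c2 * v k := by have := h2 k; rw [s2k] at this; exact this
  by_cases hk0 : v k = 0
  · exfalso
    have hvj : v j = 0 := by rw [e1j] at hk0; exact hk0
    have hvi : v i = 0 := by rw [e1i] at hvj; exact hvj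
    rw [hvi] at e2a
    rcases mul_eq_zero.1 e2a.symm with h | h
    · exact hc2 h
    · exact ha h
  · have hc2' : c2 = 1 := mul_right_cancel₀ hk0 (by rw [one_mul, ← e2k])
    rw [hc2', one_mul] at e2a
    intro m
    rcases mem4 a i j k m hai haj hak hij hik hjk with rfl | rfl | rfl | rfl
    · rfl
    · exact e2a
    · rw [e1i, e2a]
    · rw [e1j, e1i, e2a]

lemma key (v : Fin 4 → ℂ) (hv : v ≠ 0)
    (h : ∀ σ : Equiv.Perm (Fin 4), σ ∈ alternatingGroup (Fin 4) →
      permAct σ (Projectivization.mk ℂ v hv) = Projectivization.mk ℂ v hv) :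
    Projectivization.mk ℂ v hv = Projectivization.mk ℂ (fun _ => 1) (by
      intro h; have h1 := congrFun h 0; simp at h1) := by
  have Q : ∀ σ : Equiv.Perm (Fin 4), Equiv.Perm.sign σ = 1 →
      ∃ c : ℂ, c ≠ 0 ∧ ∀ m, v (σ m) = c * v m := by
    intro σ hσ
    have hσ' : σ ∈ alternatingGroup (Fin 4) := Equiv.Perm.mem_alternatingGroup.2 hσ
    have := h σ hσ'
    rw [permAct_mk] at this
    rw [Projectivization.mk_eq_mk_iff] at this
    obtain ⟨c, hc⟩ := this
    exact ⟨(c : ℂ), c.ne_zero, fun m => by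
      have := congrFun hc m
      simp only [Pi.smul_apply, smul_eq_mul] at this
      exact this.symm⟩
  obtain ⟨a, ha⟩ := Function.ne_iff.1 hv
  have hconst : ∀ m, v m = v a := by
    fin_cases a
    · exact aux_const v Q 0 1 2 3 (by decide) (by decide) (by decide) (by decide) (by decide) (by decide) ha
    · exact aux_const v Q 1 0 2 3 (by decide) (by decide) (by decide) (by decide) (by decide) (by decide) ha
    · exact aux_const v Q 2 0 1 3 (by decide) (by decide) (by decide) (by decide) (by decide) (by decide) ha
    · exact aux_const v Q 3 0 1 2 (by decide) (by decide) (by decide) (by decide) (by decide) (by decide) ha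
  rw [Projectivization.mk_eq_mk_iff]
  refine ⟨Units.mk0 (v a) ha, funext fun m => ?_⟩
  simp [hconst m]

lemma ones_fixed (σ : Equiv.Perm (Fin 4)) :
    permAct σ (Projectivization.mk ℂ (fun _ => (1:ℂ)) (by
      intro h; have h1 := congrFun h 0; simp at h1)) =
    Projectivization.mk ℂ (fun _ => (1:ℂ)) (by
      intro h; have h1 := congrFun h 0; simp at h1) := by
  rw [permAct_mk]

/-- `[1:1:1:1]` is the unique point of `ℙ³(ℂ)` fixed by all of `S₄`, and no point of
`ℙ³(ℂ)` has stabilizer exactly the alternating group `A₄`. -/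
theorem unique_S4_fixed_point_and_no_A4_stabilizer :
    (∀ p : ℙ ℂ (Fin 4 → ℂ), (∀ σ : Equiv.Perm (Fin 4), permAct σ p = p) ↔
        p = Projectivization.mk ℂ (fun _ => 1) (by
          intro h; have h1 := congrFun h 0; simp at h1)) ∧
      ¬ ∃ p : ℙ ℂ (Fin 4 → ℂ),
        {σ : Equiv.Perm (Fin 4) | permAct σ p = p} = ↑(alternatingGroup (Fin 4)) := by
  constructor
  · intro p
    constructor
    · induction p using Projectivization.ind with
      | h v hv =>
        intro h
        exact key v hv (fun σ _ => h σ)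
    · rintro rfl
      exact ones_fixed
  · rintro ⟨p, hp⟩
    induction p using Projectivization.ind with
    | h v hv =>
      have hfix : ∀ σ : Equiv.Perm (Fin 4), σ ∈ alternatingGroup (Fin 4) →
          permAct σ (Projectivization.mk ℂ v hv) = Projectivization.mk ℂ v hv := by
        intro σ hσ
        have : σ ∈ {σ : Equiv.Perm (Fin 4) | permAct σ (Projectivization.mk ℂ v hv) = Projectivization.mk ℂ v hv} := by
          rw [hp]; exact hσ
        exact this
      have hk := key v hv hfix
      have hsw : Equiv.swap (0:Fin 4) 1 ∈
          {σ : Equiv.Perm (Fin 4) | permAct σ (Projectivization.mk ℂ v hv) = Projectivization.mk ℂ v hv} := by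
        simp only [Set.mem_setOf_eq, hk]
        exact ones_fixed _
      rw [hp] at hsw
      have : Equiv.swap (0:Fin 4) 1 ∈ alternatingGroup (Fin 4) := hsw
      rw [Equiv.Perm.mem_alternatingGroup] at this
      simp [Equiv.Perm.sign_swap] at this
end

section
/- The elementary symmetric polynomial $m_{111}(z_0,z_1,z_2,z_3) = \sum_{i<j<k} z_i z_j z_k$ (defining the Cayley nodal cubic surface) has exactly four singular points in $\mathbb{P}^3$, namely the coordinate points $[1:0:0:0]$, $[0:1:0:0]$, $[0:0:1:0]$, $[0:0:0:1]$, i.e. the points where $f$ and all four partial derivatives $\partial f/\partial z_i$ vanish simultaneously. -/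
open MvPolynomial

/-- `m₁₁₁ = ∑_{i<j<k} zᵢzⱼz_k`, defining the Cayley nodal cubic surface. -/
noncomputable def m111 : MvPolynomial (Fin 4) ℂ :=
  ∑ s ∈ Finset.univ.powersetCard 3, ∏ i ∈ s, X i

lemma m111_eq : m111 = X 0*X 1*X 2 + X 0*X 1*X 3 + X 0*X 2*X 3 + X 1*X 2*X 3 := by
  rw [m111, show (Finset.univ.powersetCard 3 : Finset (Finset (Fin 4))) =
      {{0,1,2},{0,1,3},{0,2,3},{1,2,3}} from by decide]
  rw [show ({{0,1,2},{0,1,3},{0,2,3},{1,2,3}} : Finset (Finset (Fin 4))) =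
    insert {0,1,2} (insert {0,1,3} (insert {0,2,3} {{1,2,3}})) from rfl]
  rw [Finset.sum_insert (by decide), Finset.sum_insert (by decide),
      Finset.sum_insert (by decide), Finset.sum_singleton]
  rw [show ({0,1,2} : Finset (Fin 4)) = insert 0 (insert 1 {2}) from rfl,
      show ({0,1,3} : Finset (Fin 4)) = insert 0 (insert 1 {3}) from rfl,
      show ({0,2,3} : Finset (Fin 4)) = insert 0 (insert 2 {3}) from rfl,
      show ({1,2,3} : Finset (Fin 4)) = insert 1 (insert 2 {3}) from rfl]
  rw [Finset.prod_insert (by decide), Finset.prod_insert (by decide), Finset.prod_singleton,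
      Finset.prod_insert (by decide), Finset.prod_insert (by decide), Finset.prod_singleton,
      Finset.prod_insert (by decide), Finset.prod_insert (by decide), Finset.prod_singleton,
      Finset.prod_insert (by decide), Finset.prod_insert (by decide), Finset.prod_singleton]
  ring

lemma eval_m111 (u : Fin 4 → ℂ) :
    eval u m111 = u 0 * u 1 * u 2 + u 0 * u 1 * u 3 + u 0 * u 2 * u 3 + u 1 * u 2 * u 3 := by
  simp [m111_eq]

lemma eval_pd0 (u : Fin 4 → ℂ) :
    eval u (pderiv 0 m111) = u 1 * u 2 + u 1 * u 3 + u 2 * u 3 := by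
  simp [m111_eq, pderiv_mul, pderiv_X]; ring

lemma eval_pd1 (u : Fin 4 → ℂ) :
    eval u (pderiv 1 m111) = u 0 * u 2 + u 0 * u 3 + u 2 * u 3 := by
  simp [m111_eq, pderiv_mul, pderiv_X]; ring

lemma eval_pd2 (u : Fin 4 → ℂ) :
    eval u (pderiv 2 m111) = u 0 * u 1 + u 0 * u 3 + u 1 * u 3 := by
  simp [m111_eq, pderiv_mul, pderiv_X]; ring

lemma eval_pd3 (u : Fin 4 → ℂ) :
    eval u (pderiv 3 m111) = u 0 * u 1 + u 0 * u 2 + u 1 * u 2 := by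
  simp [m111_eq, pderiv_mul, pderiv_X]; try ring

lemma eq_zero4 (v : Fin 4 → ℂ) (h0 : v 0 = 0) (h1 : v 1 = 0) (h2 : v 2 = 0) (h3 : v 3 = 0) :
    v = 0 := by
  funext j; fin_cases j <;> simpa

lemma eq_single0 (v : Fin 4 → ℂ) (s : ℂ) (h0 : v 0 = s) (h1 : v 1 = 0) (h2 : v 2 = 0)
    (h3 : v 3 = 0) : v = s • (Pi.single (0 : Fin 4) 1 : Fin 4 → ℂ) := by
  funext j; fin_cases j <;> simp [Pi.single_apply, *]

lemma eq_single1 (v : Fin 4 → ℂ) (s : ℂ) (h0 : v 0 = 0) (h1 : v 1 = s) (h2 : v 2 = 0)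
    (h3 : v 3 = 0) : v = s • (Pi.single (1 : Fin 4) 1 : Fin 4 → ℂ) := by
  funext j; fin_cases j <;> simp [Pi.single_apply, *]

lemma eq_single2 (v : Fin 4 → ℂ) (s : ℂ) (h0 : v 0 = 0) (h1 : v 1 = 0) (h2 : v 2 = s)
    (h3 : v 3 = 0) : v = s • (Pi.single (2 : Fin 4) 1 : Fin 4 → ℂ) := by
  funext j; fin_cases j <;> simp [Pi.single_apply, *]

lemma eq_single3 (v : Fin 4 → ℂ) (s : ℂ) (h0 : v 0 = 0) (h1 : v 1 = 0) (h2 : v 2 = 0)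
    (h3 : v 3 = s) : v = s • (Pi.single (3 : Fin 4) 1 : Fin 4 → ℂ) := by
  funext j; fin_cases j <;> simp [Pi.single_apply, *]

/-- The singular points of the Cayley nodal cubic `V(m₁₁₁) ⊂ ℙ³` are exactly the four
coordinate points. -/
theorem cayley_singular_points :
    {v : Fin 4 → ℂ | v ≠ 0 ∧ eval v m111 = 0 ∧ ∀ i : Fin 4, eval v (pderiv i m111) = 0} =
      {v : Fin 4 → ℂ | ∃ (i : Fin 4) (c : ℂ), c ≠ 0 ∧ v = c • (Pi.single i 1 : Fin 4 → ℂ)} := by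
  ext v
  simp only [Set.mem_setOf_eq]
  constructor
  · rintro ⟨hv, -, hd⟩
    have h0 := (eval_pd0 v) ▸ hd 0
    have h1 := (eval_pd1 v) ▸ hd 1
    have h2 := (eval_pd2 v) ▸ hd 2
    have h3 := (eval_pd3 v) ▸ hd 3
    obtain ⟨s, hsdef⟩ : ∃ s : ℂ, s = v 0 + v 1 + v 2 + v 3 := ⟨_, rfl⟩
    have p0 : v 0 = 0 ∨ v 0 = s := by
      have h : v 0 * (s - v 0) = 0 := by
        rw [hsdef]
        linear_combination (-(1:ℂ)/2)*h0 + ((1:ℂ)/2)*h1 + ((1:ℂ)/2)*h2 + ((1:ℂ)/2)*h3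
      rcases mul_eq_zero.mp h with h | h
      · exact Or.inl h
      · exact Or.inr (sub_eq_zero.mp h).symm
    have p1 : v 1 = 0 ∨ v 1 = s := by
      have h : v 1 * (s - v 1) = 0 := by
        rw [hsdef]
        linear_combination ((1:ℂ)/2)*h0 + (-(1:ℂ)/2)*h1 + ((1:ℂ)/2)*h2 + ((1:ℂ)/2)*h3
      rcases mul_eq_zero.mp h with h | h
      · exact Or.inl h
      · exact Or.inr (sub_eq_zero.mp h).symm
    have p2 : v 2 = 0 ∨ v 2 = s := by
      have h : v 2 * (s - v 2) = 0 := by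
        rw [hsdef]
        linear_combination ((1:ℂ)/2)*h0 + ((1:ℂ)/2)*h1 + (-(1:ℂ)/2)*h2 + ((1:ℂ)/2)*h3
      rcases mul_eq_zero.mp h with h | h
      · exact Or.inl h
      · exact Or.inr (sub_eq_zero.mp h).symm
    have p3 : v 3 = 0 ∨ v 3 = s := by
      have h : v 3 * (s - v 3) = 0 := by
        rw [hsdef]
        linear_combination ((1:ℂ)/2)*h0 + ((1:ℂ)/2)*h1 + ((1:ℂ)/2)*h2 + (-(1:ℂ)/2)*h3
      rcases mul_eq_zero.mp h with h | h
      · exact Or.inl h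
      · exact Or.inr (sub_eq_zero.mp h).symm
    rcases p0 with ha | ha <;> rcases p1 with hb | hb <;> rcases p2 with hc | hc <;>
        rcases p3 with hd' | hd' <;>
      (by_cases hs : s = 0
       · subst hs
         exact absurd (eq_zero4 v (by simp [ha]) (by simp [hb]) (by simp [hc])
           (by simp [hd'])) hv
       · first
          | exact ⟨0, s, hs, eq_single0 v s ha hb hc hd'⟩
          | exact ⟨1, s, hs, eq_single1 v s ha hb hc hd'⟩
          | exact ⟨2, s, hs, eq_single2 v s ha hb hc hd'⟩
          | exact ⟨3, s, hs, eq_single3 v s ha hb hc hd'⟩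
          | exact absurd (by linear_combination hsdef + ha + hb + hc + hd') hs
          | exact absurd (by linear_combination (-(1:ℂ))*(hsdef + ha + hb + hc + hd')) hs
          | exact absurd (by linear_combination (-(1:ℂ)/2)*(hsdef + ha + hb + hc + hd')) hs
          | exact absurd (by linear_combination (-(1:ℂ)/3)*(hsdef + ha + hb + hc + hd')) hs)
  · rintro ⟨i, c, hc, rfl⟩
    have hval : ∀ j : Fin 4, (c • (Pi.single i 1 : Fin 4 → ℂ)) j = if j = i then c else 0 := by
      intro j; by_cases hj : j = i <;> simp [Pi.single_apply, hj]
    refine ⟨?_, ?_, ?_⟩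
    · intro h
      apply hc
      have := congrFun h i
      simpa using this
    · rw [eval_m111]
      fin_cases i <;> simp [hval]
    · intro j
      fin_cases j
      · show eval (c • (Pi.single i 1 : Fin 4 → ℂ)) (pderiv 0 m111) = 0
        rw [eval_pd0]; fin_cases i <;> simp [hval]
      · show eval (c • (Pi.single i 1 : Fin 4 → ℂ)) (pderiv 1 m111) = 0
        rw [eval_pd1]; fin_cases i <;> simp [hval]
      · show eval (c • (Pi.single i 1 : Fin 4 → ℂ)) (pderiv 2 m111) = 0
        rw [eval_pd2]; fin_cases i <;> simp [hval]
      · show eval (c • (Pi.single i 1 : Fin 4 → ℂ)) (pderiv 3 m111) = 0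
        rw [eval_pd3]; fin_cases i <;> simp [hval]
end

section
/- The Fermat cubic surface $z_0^3+z_1^3+z_2^3+z_3^3=0$ contains exactly $27$ lines: the lines parametrized by $[w:z]\mapsto$ a point whose coordinates are a permutation-pattern of $(w, \alpha w, z, \beta z)$ with $\alpha^3 = \beta^3 = -1$, grouped into the three families pairing coordinates $\{0,1\},\{2,3\}$; $\{0,2\},\{1,3\}$; $\{0,3\},\{1,2\}$, giving $3 \times 9 = 27$ lines in total. -/
open MvPolynomial

/-- The Fermat cubic polynomial `z₀³+z₁³+z₂³+z₃³`. -/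
noncomputable def fermat : MvPolynomial (Fin 4) ℂ := ∑ i : Fin 4, X i ^ 3

/-- The set of (projective) lines on the Fermat cubic surface, as 2-dimensional linear
subspaces of `ℂ⁴` on which `m₃` vanishes. -/
def fermatLines : Set (Submodule ℂ (Fin 4 → ℂ)) :=
  {W | Module.finrank ℂ ↥W = 2 ∧ ∀ v ∈ W, eval v fermat = 0}

def lineSet (i j k l : Fin 4) (α β : ℂ) : Set (Fin 4 → ℂ) :=
  {v | v j = α * v i ∧ v l = β * v k}

lemma sum4 {M : Type*} [AddCommMonoid M] {i j k l : Fin 4}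
    (hij : i ≠ j) (hik : i ≠ k) (hil : i ≠ l) (hjk : j ≠ k) (hjl : j ≠ l) (hkl : k ≠ l)
    (F : Fin 4 → M) : ∑ m, F m = F i + F j + F k + F l := by
  have hu : (Finset.univ : Finset (Fin 4)) = {i, j, k, l} := by
    symm; apply Finset.eq_univ_of_card
    rw [Finset.card_insert_of_notMem (by simp [hij, hik, hil]),
      Finset.card_insert_of_notMem (by simp [hjk, hjl]),
      Finset.card_insert_of_notMem (by simp [hkl]), Finset.card_singleton]
    rfl
  rw [hu, Finset.sum_insert (by simp [hij, hik, hil]),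
    Finset.sum_insert (by simp [hjk, hjl]), Finset.sum_insert (by simp [hkl]),
    Finset.sum_singleton]
  abel

lemma eval_fermat (v : Fin 4 → ℂ) :
    eval v fermat = v 0 ^ 3 + v 1 ^ 3 + v 2 ^ 3 + v 3 ^ 3 := by
  simp [fermat, Fin.sum_univ_four]

noncomputable def lineSub (i j k l : Fin 4) (α β : ℂ) : Submodule ℂ (Fin 4 → ℂ) where
  carrier := lineSet i j k l α β
  add_mem' := by
    rintro a b ⟨ha1, ha2⟩ ⟨hb1, hb2⟩
    exact ⟨by simp [ha1, hb1]; ring, by simp [ha2, hb2]; ring⟩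
  zero_mem' := by simp [lineSet]
  smul_mem' := by
    rintro c a ⟨ha1, ha2⟩
    exact ⟨by simp [ha1]; ring, by simp [ha2]; ring⟩

@[simp] lemma mem_lineSub {i j k l : Fin 4} {α β : ℂ} {v : Fin 4 → ℂ} :
    v ∈ lineSub i j k l α β ↔ v j = α * v i ∧ v l = β * v k := Iff.rfl

lemma lineSub_mem_fermatLines {i j k l : Fin 4} {α β : ℂ}
    (hij : i ≠ j) (hik : i ≠ k) (hil : i ≠ l) (hjk : j ≠ k) (hjl : j ≠ l) (hkl : k ≠ l)
    (hcov : ∀ m : Fin 4, m = i ∨ m = j ∨ m = k ∨ m = l)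
    (hα : α ^ 3 = -1) (hβ : β ^ 3 = -1) :
    Module.finrank ℂ ↥(lineSub i j k l α β) = 2 ∧
      ∀ v ∈ lineSub i j k l α β, eval v fermat = 0 := by
  constructor
  · -- finrank = 2
    classical
    set u : Fin 4 → ℂ := fun m => if m = i then 1 else if m = j then α else 0 with hu
    set w : Fin 4 → ℂ := fun m => if m = k then 1 else if m = l then β else 0 with hw
    have hspan : lineSub i j k l α β = Submodule.span ℂ (Set.range ![u, w]) := by
      apply le_antisymm
      · intro v hv
        obtain ⟨h1, h2⟩ := hv
        have : v = v i • u + v k • w := by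
          funext m
          rcases hcov m with rfl | rfl | rfl | rfl <;>
            simp [hu, hw, hij, hik, hil, hjk, hjl, hkl, Ne.symm hij, Ne.symm hik,
              Ne.symm hil, Ne.symm hjk, Ne.symm hjl, Ne.symm hkl, h1, h2] <;> ring
        rw [this]
        exact Submodule.add_mem _
          (Submodule.smul_mem _ _ (Submodule.subset_span ⟨0, rfl⟩))
          (Submodule.smul_mem _ _ (Submodule.subset_span ⟨1, rfl⟩))
      · rw [Submodule.span_le]
        rintro x ⟨m, rfl⟩
        fin_cases m <;>
          exact ⟨by simp [hu, hw, hij, hik, hil, hjk, hjl, hkl, Ne.symm hij, Ne.symm hik,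
              Ne.symm hil, Ne.symm hjk, Ne.symm hjl, Ne.symm hkl],
            by simp [hu, hw, hij, hik, hil, hjk, hjl, hkl, Ne.symm hij, Ne.symm hik,
              Ne.symm hil, Ne.symm hjk, Ne.symm hjl, Ne.symm hkl]⟩
    rw [hspan]
    rw [finrank_span_eq_card (?_ : LinearIndependent ℂ ![u, w])]
    · rfl
    · rw [LinearIndependent.pair_iff]
      intro s t hst
      have h1 := congrFun hst i
      have h2 := congrFun hst k
      simp [hu, hw, hik, Ne.symm hik, hil, Ne.symm hjk, Ne.symm hjl] at h1 h2
      exact ⟨h1, h2⟩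
  · rintro v ⟨h1, h2⟩
    rw [show eval v fermat = ∑ m, v m ^ 3 by simp [fermat]]
    rw [sum4 hij hik hil hjk hjl hkl]
    rw [h1, h2]
    linear_combination (v i ^ 3) * hα + (v k ^ 3) * hβ

lemma cube_ne_zero {x : ℂ} (hx : x ^ 3 = -1) : x ≠ 0 := by
  intro h; rw [h] at hx; norm_num at hx

lemma solve (i j k l : Fin 4)
    (hij : i ≠ j) (hik : i ≠ k) (hil : i ≠ l) (hjk : j ≠ k) (hjl : j ≠ l) (hkl : k ≠ l)
    (hcov : ∀ m : Fin 4, m = i ∨ m = j ∨ m = k ∨ m = l)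
    (W : Submodule ℂ (Fin 4 → ℂ))
    (h0 : ∀ v ∈ W, eval v fermat = 0)
    (u v : Fin 4 → ℂ) (hu : u ∈ W) (hv : v ∈ W)
    (hspan : ∀ w ∈ W, ∃ s t : ℂ, w = s • u + t • v)
    (hD : u i * v j - u j * v i ≠ 0) :
    ∃ γ δ : ℂ, γ ^ 3 = -1 ∧ δ ^ 3 = -1 ∧
      ((W : Set (Fin 4 → ℂ)) = lineSet j k i l γ δ ∨
        (W : Set (Fin 4 → ℂ)) = lineSet i k j l γ δ) := by
  classical
  set D := u i * v j - u j * v i with hDdef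
  set a := (u k * v j - v k * u j) / D with hadef
  set b := (u i * v k - v i * u k) / D with hbdef
  set c := (u l * v j - v l * u j) / D with hcdef
  set d := (u i * v l - v i * u l) / D with hddef
  have hW : (W : Set (Fin 4 → ℂ)) =
      {w : Fin 4 → ℂ | w k = a * w i + b * w j ∧ w l = c * w i + d * w j} := by
    apply Set.eq_of_subset_of_subset
    · intro w hw
      obtain ⟨s, t, rfl⟩ := hspan w hw
      constructor
      · show s * u k + t * v k = a * (s * u i + t * v i) + b * (s * u j + t * v j)
        rw [hadef, hbdef]
        field_simp
        ring
      · show s * u l + t * v l = c * (s * u i + t * v i) + d * (s * u j + t * v j)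
        rw [hcdef, hddef]
        field_simp
        ring
    · rintro w ⟨h1, h2⟩
      set s := (w i * v j - w j * v i) / D with hsdef
      set t := (u i * w j - u j * w i) / D with htdef
      have hw : w = s • u + t • v := by
        funext m
        show w m = s * u m + t * v m
        rcases hcov m with rfl | rfl | rfl | rfl
        · rw [hsdef, htdef]; field_simp; ring
        · rw [hsdef, htdef]; field_simp; ring
        · rw [h1, hsdef, htdef, hadef, hbdef]; field_simp; ring
        · rw [h2, hsdef, htdef, hcdef, hddef]; field_simp; ring
      rw [hw]
      exact Submodule.add_mem _ (Submodule.smul_mem _ _ hu) (Submodule.smul_mem _ _ hv)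
  have hE : ∀ s t : ℂ, s^3 + t^3 + (a*s+b*t)^3 + (c*s+d*t)^3 = 0 := by
    intro s t
    set w : Fin 4 → ℂ := fun m => if m = i then s else if m = j then t
      else if m = k then a*s+b*t else c*s+d*t with hwdef
    have hwW : w ∈ W := by
      rw [← SetLike.mem_coe, hW]
      constructor
      · simp [hwdef, hjk, hik, Ne.symm hik, Ne.symm hjk, hij, Ne.symm hij, hkl]
      · simp [hwdef, hil, hjl, hkl, Ne.symm hil, Ne.symm hjl, Ne.symm hkl, hij, Ne.symm hij]
    have hthis := h0 w hwW
    rw [show eval w fermat = ∑ m, w m ^ 3 by simp [fermat]] at hthis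
    rw [sum4 hij hik hil hjk hjl hkl] at hthis
    have wi : w i = s := by simp [hwdef]
    have wj : w j = t := by simp [hwdef, Ne.symm hij]
    have wk : w k = a*s+b*t := by simp [hwdef, Ne.symm hik, Ne.symm hjk]
    have wl : w l = c*s+d*t := by simp [hwdef, Ne.symm hil, Ne.symm hjl, Ne.symm hkl]
    rw [wi, wj, wk, wl] at hthis
    linear_combination hthis
  have E1 : 1 + a^3 + c^3 = 0 := by linear_combination hE 1 0
  have E4 : 1 + b^3 + d^3 = 0 := by linear_combination hE 0 1
  have E2 : a^2*b + c^2*d = 0 := by linear_combination (hE 1 1)/6 - (hE 1 (-1))/6 - E4/3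
  have E3 : a*b^2 + c*d^2 = 0 := by linear_combination (hE 1 1)/6 + (hE 1 (-1))/6 - E1/3
  by_cases ha : a = 0
  · have hc3 : c^3 = -1 := by linear_combination E1 - ha * (a^2)
    have hcne : c ≠ 0 := cube_ne_zero hc3
    have hd : d = 0 := by
      have : c^2*d = 0 := by linear_combination E2 - (a*b)*ha
      rcases mul_eq_zero.mp this with h | h
      · exact absurd h (pow_ne_zero 2 hcne)
      · exact h
    have hb3 : b^3 = -1 := by linear_combination E4 - hd * (d^2)
    refine ⟨b, c, hb3, hc3, Or.inl ?_⟩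
    rw [hW]; ext w; simp [lineSet, ha, hd]
  · by_cases hb : b = 0
    · have hd3 : d^3 = -1 := by linear_combination E4 - hb * (b^2)
      have hdne : d ≠ 0 := cube_ne_zero hd3
      have hc : c = 0 := by
        have : c*d^2 = 0 := by linear_combination E3 - (a*b)*hb
        rcases mul_eq_zero.mp this with h | h
        · exact h
        · exact absurd h (pow_ne_zero 2 hdne)
      have ha3 : a^3 = -1 := by linear_combination E1 - hc * (c^2)
      refine ⟨a, d, ha3, hd3, Or.inr ?_⟩
      rw [hW]; ext w; simp [lineSet, hb, hc]
    · exfalso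
      have hc : c ≠ 0 := by
        intro h
        have : a^2*b = 0 := by linear_combination E2 - d*(c*h)
        rcases mul_eq_zero.mp this with h' | h'
        · exact ha (pow_eq_zero_iff (by norm_num)|>.mp h')
        · exact hb h'
      have hd : d ≠ 0 := by
        intro h
        have : a*b^2 = 0 := by linear_combination E3 - c*(d*h)
        rcases mul_eq_zero.mp this with h' | h'
        · exact ha h'
        · exact hb (pow_eq_zero_iff (by norm_num)|>.mp h')
      -- derive contradiction
      have key : a*b^2*c = 0 := by
        have h5 : a*b^2*c*(a^3+c^3) = 0 := by
          linear_combination (c^4)*E3 + (a^2*b*c - c^3*d)*E2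
        have h6 : a^3 + c^3 = -1 := by linear_combination E1
        rw [h6] at h5
        linear_combination -h5
      rcases mul_eq_zero.mp key with h' | h'
      · rcases mul_eq_zero.mp h' with h'' | h''
        · exact ha h''
        · exact hb (pow_eq_zero_iff (by norm_num)|>.mp h'')
      · exact hc h'

lemma exists_basis_minor (W : Submodule ℂ (Fin 4 → ℂ)) (h2 : Module.finrank ℂ ↥W = 2) :
    ∃ u v : Fin 4 → ℂ, u ∈ W ∧ v ∈ W ∧ (∀ w ∈ W, ∃ s t : ℂ, w = s • u + t • v) ∧
      ∃ i j : Fin 4, u i * v j - u j * v i ≠ 0 := by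
  have hfd : Module.Finite ℂ ↥W := Module.finite_of_finrank_eq_succ h2
  let b : Module.Basis (Fin 2) ℂ ↥W := Module.finBasisOfFinrankEq ℂ ↥W h2
  set u : Fin 4 → ℂ := (b 0 : Fin 4 → ℂ) with hudef
  set v : Fin 4 → ℂ := (b 1 : Fin 4 → ℂ) with hvdef
  have hind : LinearIndependent ℂ (fun m : Fin 2 => ((b m : ↥W) : Fin 4 → ℂ)) :=
    b.linearIndependent.map' W.subtype W.ker_subtype
  refine ⟨u, v, (b 0).2, (b 1).2, ?_, ?_⟩
  · intro w hw
    have hsum : (b.repr ⟨w, hw⟩ 0) • b 0 + (b.repr ⟨w, hw⟩ 1) • b 1 = ⟨w, hw⟩ := by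
      rw [← Fin.sum_univ_two (f := fun m => b.repr ⟨w, hw⟩ m • b m)]
      exact Module.Basis.sum_repr b ⟨w, hw⟩
    refine ⟨b.repr ⟨w, hw⟩ 0, b.repr ⟨w, hw⟩ 1, ?_⟩
    have h' := congrArg Subtype.val hsum
    simp only [Submodule.coe_add, SetLike.val_smul] at h'
    exact h'.symm
  · by_contra h
    push_neg at h
    have hu0 : u ≠ 0 := by
      intro h0
      apply Module.Basis.ne_zero b 0
      apply Subtype.val_injective
      exact h0
    obtain ⟨i, hi⟩ : ∃ i, u i ≠ 0 := by
      by_contra h'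
      push_neg at h'
      exact hu0 (funext h')
    have hli := Fintype.linearIndependent_iff.mp hind ![v i, -(u i)] ?_ 1
    · rw [show (![v i, -(u i)] 1) = -(u i) from rfl, neg_eq_zero] at hli
      exact hi hli
    · rw [Fin.sum_univ_two]
      show v i • u + (-(u i)) • v = 0
      funext m
      show v i * u m + (-(u i)) * v m = 0
      linear_combination h m i

lemma inv_cube {x : ℂ} (hx : x ^ 3 = -1) : (x⁻¹) ^ 3 = -1 := by
  rw [inv_pow, hx]; norm_num

lemma lineSet_comm (i j k l : Fin 4) (α β : ℂ) :
    lineSet i j k l α β = lineSet k l i j β α := by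
  ext w; exact and_comm

lemma lineSet_inv₁ {i j k l : Fin 4} {α β : ℂ} (h : α ≠ 0) :
    lineSet i j k l α β = lineSet j i k l α⁻¹ β := by
  ext w
  simp only [lineSet, Set.mem_setOf_eq]
  constructor
  · rintro ⟨h1, h2⟩
    exact ⟨by rw [h1, inv_mul_cancel_left₀ h], h2⟩
  · rintro ⟨h1, h2⟩
    exact ⟨by rw [h1, mul_inv_cancel_left₀ h], h2⟩

lemma lineSet_inv₂ {i j k l : Fin 4} {α β : ℂ} (h : β ≠ 0) :
    lineSet i j k l α β = lineSet i j l k α β⁻¹ := by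
  ext w
  simp only [lineSet, Set.mem_setOf_eq]
  constructor
  · rintro ⟨h1, h2⟩
    exact ⟨h1, by rw [h2, inv_mul_cancel_left₀ h]⟩
  · rintro ⟨h1, h2⟩
    exact ⟨h1, by rw [h2, mul_inv_cancel_left₀ h]⟩

lemma forward (W : Submodule ℂ (Fin 4 → ℂ)) (h2 : Module.finrank ℂ ↥W = 2)
    (h0 : ∀ v ∈ W, eval v fermat = 0) :
    ∃ α β : ℂ, α ^ 3 = -1 ∧ β ^ 3 = -1 ∧
      ((W : Set (Fin 4 → ℂ)) = lineSet 0 1 2 3 α β ∨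
        (W : Set (Fin 4 → ℂ)) = lineSet 0 2 1 3 α β ∨
        (W : Set (Fin 4 → ℂ)) = lineSet 0 3 1 2 α β) := by
  obtain ⟨u, v, hu, hv, hspan, i, j, hm⟩ := exists_basis_minor W h2
  fin_cases i <;> fin_cases j
  · simp at hm
  · obtain ⟨γ, δ, hγ, hδ, hEq | hEq⟩ := solve 0 1 2 3 (by decide) (by decide) (by decide) (by decide) (by decide) (by decide) (by decide) W h0 u v hu hv hspan hm
    · exact ⟨δ, γ, hδ, hγ, Or.inr (Or.inr (by rw [hEq, lineSet_comm _ _ _ _ _ _]))⟩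
    · exact ⟨γ, δ, hγ, hδ, Or.inr (Or.inl (hEq))⟩
  · obtain ⟨γ, δ, hγ, hδ, hEq | hEq⟩ := solve 0 2 1 3 (by decide) (by decide) (by decide) (by decide) (by decide) (by decide) (by decide) W h0 u v hu hv hspan hm
    · exact ⟨δ, γ⁻¹, hδ, inv_cube hγ, Or.inr (Or.inr (by rw [hEq, lineSet_comm _ _ _ _ _ _, lineSet_inv₂ (cube_ne_zero hγ)]))⟩
    · exact ⟨γ, δ, hγ, hδ, Or.inl (hEq)⟩
  · obtain ⟨γ, δ, hγ, hδ, hEq | hEq⟩ := solve 0 3 1 2 (by decide) (by decide) (by decide) (by decide) (by decide) (by decide) (by decide) W h0 u v hu hv hspan hm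
    · exact ⟨δ, γ⁻¹, hδ, inv_cube hγ, Or.inr (Or.inl (by rw [hEq, lineSet_comm _ _ _ _ _ _, lineSet_inv₂ (cube_ne_zero hγ)]))⟩
    · exact ⟨γ, δ⁻¹, hγ, inv_cube hδ, Or.inl (by rw [hEq, lineSet_inv₂ (cube_ne_zero hδ)])⟩
  · obtain ⟨γ, δ, hγ, hδ, hEq | hEq⟩ := solve 1 0 2 3 (by decide) (by decide) (by decide) (by decide) (by decide) (by decide) (by decide) W h0 u v hu hv hspan hm
    · exact ⟨γ, δ, hγ, hδ, Or.inr (Or.inl (hEq))⟩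
    · exact ⟨δ, γ, hδ, hγ, Or.inr (Or.inr (by rw [hEq, lineSet_comm _ _ _ _ _ _]))⟩
  · simp at hm
  · obtain ⟨γ, δ, hγ, hδ, hEq | hEq⟩ := solve 1 2 0 3 (by decide) (by decide) (by decide) (by decide) (by decide) (by decide) (by decide) W h0 u v hu hv hspan hm
    · exact ⟨γ⁻¹, δ, inv_cube hγ, hδ, Or.inr (Or.inl (by rw [hEq, lineSet_inv₁ (cube_ne_zero hγ)]))⟩
    · exact ⟨γ⁻¹, δ, inv_cube hγ, hδ, Or.inl (by rw [hEq, lineSet_inv₁ (cube_ne_zero hγ)])⟩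
  · obtain ⟨γ, δ, hγ, hδ, hEq | hEq⟩ := solve 1 3 0 2 (by decide) (by decide) (by decide) (by decide) (by decide) (by decide) (by decide) W h0 u v hu hv hspan hm
    · exact ⟨γ⁻¹, δ, inv_cube hγ, hδ, Or.inr (Or.inr (by rw [hEq, lineSet_inv₁ (cube_ne_zero hγ)]))⟩
    · exact ⟨γ⁻¹, δ⁻¹, inv_cube hγ, inv_cube hδ, Or.inl (by rw [hEq, lineSet_inv₁ (cube_ne_zero hγ), lineSet_inv₂ (cube_ne_zero hδ)])⟩
  · obtain ⟨γ, δ, hγ, hδ, hEq | hEq⟩ := solve 2 0 1 3 (by decide) (by decide) (by decide) (by decide) (by decide) (by decide) (by decide) W h0 u v hu hv hspan hm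
    · exact ⟨γ, δ, hγ, hδ, Or.inl (hEq)⟩
    · exact ⟨δ, γ⁻¹, hδ, inv_cube hγ, Or.inr (Or.inr (by rw [hEq, lineSet_comm _ _ _ _ _ _, lineSet_inv₂ (cube_ne_zero hγ)]))⟩
  · obtain ⟨γ, δ, hγ, hδ, hEq | hEq⟩ := solve 2 1 0 3 (by decide) (by decide) (by decide) (by decide) (by decide) (by decide) (by decide) W h0 u v hu hv hspan hm
    · exact ⟨γ⁻¹, δ, inv_cube hγ, hδ, Or.inl (by rw [hEq, lineSet_inv₁ (cube_ne_zero hγ)])⟩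
    · exact ⟨γ⁻¹, δ, inv_cube hγ, hδ, Or.inr (Or.inl (by rw [hEq, lineSet_inv₁ (cube_ne_zero hγ)]))⟩
  · simp at hm
  · obtain ⟨γ, δ, hγ, hδ, hEq | hEq⟩ := solve 2 3 0 1 (by decide) (by decide) (by decide) (by decide) (by decide) (by decide) (by decide) W h0 u v hu hv hspan hm
    · exact ⟨γ⁻¹, δ⁻¹, inv_cube hγ, inv_cube hδ, Or.inr (Or.inr (by rw [hEq, lineSet_inv₁ (cube_ne_zero hγ), lineSet_inv₂ (cube_ne_zero hδ)]))⟩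
    · exact ⟨γ⁻¹, δ⁻¹, inv_cube hγ, inv_cube hδ, Or.inr (Or.inl (by rw [hEq, lineSet_inv₁ (cube_ne_zero hγ), lineSet_inv₂ (cube_ne_zero hδ)]))⟩
  · obtain ⟨γ, δ, hγ, hδ, hEq | hEq⟩ := solve 3 0 1 2 (by decide) (by decide) (by decide) (by decide) (by decide) (by decide) (by decide) W h0 u v hu hv hspan hm
    · exact ⟨γ, δ⁻¹, hγ, inv_cube hδ, Or.inl (by rw [hEq, lineSet_inv₂ (cube_ne_zero hδ)])⟩
    · exact ⟨δ, γ⁻¹, hδ, inv_cube hγ, Or.inr (Or.inl (by rw [hEq, lineSet_comm _ _ _ _ _ _, lineSet_inv₂ (cube_ne_zero hγ)]))⟩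
  · obtain ⟨γ, δ, hγ, hδ, hEq | hEq⟩ := solve 3 1 0 2 (by decide) (by decide) (by decide) (by decide) (by decide) (by decide) (by decide) W h0 u v hu hv hspan hm
    · exact ⟨γ⁻¹, δ⁻¹, inv_cube hγ, inv_cube hδ, Or.inl (by rw [hEq, lineSet_inv₁ (cube_ne_zero hγ), lineSet_inv₂ (cube_ne_zero hδ)])⟩
    · exact ⟨γ⁻¹, δ, inv_cube hγ, hδ, Or.inr (Or.inr (by rw [hEq, lineSet_inv₁ (cube_ne_zero hγ)]))⟩
  · obtain ⟨γ, δ, hγ, hδ, hEq | hEq⟩ := solve 3 2 0 1 (by decide) (by decide) (by decide) (by decide) (by decide) (by decide) (by decide) W h0 u v hu hv hspan hm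
    · exact ⟨γ⁻¹, δ⁻¹, inv_cube hγ, inv_cube hδ, Or.inr (Or.inl (by rw [hEq, lineSet_inv₁ (cube_ne_zero hγ), lineSet_inv₂ (cube_ne_zero hδ)]))⟩
    · exact ⟨γ⁻¹, δ⁻¹, inv_cube hγ, inv_cube hδ, Or.inr (Or.inr (by rw [hEq, lineSet_inv₁ (cube_ne_zero hγ), lineSet_inv₂ (cube_ne_zero hδ)]))⟩
  · simp at hm

open Polynomial in
noncomputable def RF : Finset ℂ := (Polynomial.nthRootsFinset 3 (1 : ℂ)).image (fun x => -x)

lemma mem_RF {y : ℂ} : y ∈ RF ↔ y ^ 3 = -1 := by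
  simp only [RF, Finset.mem_image]
  constructor
  · rintro ⟨x, hx, rfl⟩
    rw [Polynomial.mem_nthRootsFinset (by norm_num)] at hx
    rw [show (-x)^3 = -(x^3) by ring, hx]
  · intro hy
    refine ⟨-y, ?_, by ring⟩
    rw [Polynomial.mem_nthRootsFinset (by norm_num)]
    rw [show (-y)^3 = -(y^3) by ring, hy]; ring

lemma card_RF : RF.card = 3 := by
  rw [RF, Finset.card_image_of_injective _ neg_injective]
  exact (Complex.isPrimitiveRoot_exp 3 (by norm_num)).card_nthRootsFinset

noncomputable def lineF : ℂ × ℂ × Fin 3 → Submodule ℂ (Fin 4 → ℂ) := fun p =>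
  ![lineSub 0 1 2 3 p.1 p.2.1, lineSub 0 2 1 3 p.1 p.2.1, lineSub 0 3 1 2 p.1 p.2.1] p.2.2

noncomputable def PP : Finset (ℂ × ℂ × Fin 3) := RF ×ˢ RF ×ˢ Finset.univ

lemma card_PP : PP.card = 27 := by
  rw [PP, Finset.card_product, Finset.card_product, card_RF]
  simp

lemma coe_lineF0 (α β : ℂ) : ((lineF (α, β, 0) : Submodule ℂ (Fin 4 → ℂ)) : Set (Fin 4 → ℂ))
    = lineSet 0 1 2 3 α β := rfl
lemma coe_lineF1 (α β : ℂ) : ((lineF (α, β, 1) : Submodule ℂ (Fin 4 → ℂ)) : Set (Fin 4 → ℂ))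
    = lineSet 0 2 1 3 α β := rfl
lemma coe_lineF2 (α β : ℂ) : ((lineF (α, β, 2) : Submodule ℂ (Fin 4 → ℂ)) : Set (Fin 4 → ℂ))
    = lineSet 0 3 1 2 α β := rfl

lemma injOn_lineF : Set.InjOn lineF ↑PP := by
  rintro ⟨α, β, t⟩ hp ⟨α', β', t'⟩ hq h
  simp only [PP, Finset.coe_product, Set.mem_prod, Finset.mem_coe, mem_RF] at hp hq
  obtain ⟨hα, hβ, -⟩ := hp
  obtain ⟨hα', hβ', -⟩ := hq
  have hα0 := cube_ne_zero hα
  have hα0' := cube_ne_zero hα'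
  fin_cases t <;> fin_cases t' <;>
    simp only [Fin.mk_zero, Fin.mk_one, show (⟨2, by omega⟩ : Fin 3) = 2 from rfl] at h <;>
    have hs := Set.ext_iff.mp (congrArg
      (fun M : Submodule ℂ (Fin 4 → ℂ) => (M : Set (Fin 4 → ℂ))) h) <;>
    simp only [coe_lineF0, coe_lineF1, coe_lineF2] at hs
  · have hw := (hs ![1, α, 1, β]).mp ⟨by simp [lineSet], by simp [lineSet]⟩
    obtain ⟨h1, h2⟩ := hw
    simp only [lineSet, Set.mem_setOf_eq, Matrix.cons_val_zero, Matrix.cons_val_one,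
      Matrix.head_cons, Matrix.cons_val_two, Matrix.cons_val_three, Matrix.tail_cons,
      mul_one] at h1 h2
    subst h1
    subst h2
    rfl
  · exfalso
    have hw := (hs ![1, α, 0, 0]).mp ⟨by simp [lineSet], by simp [lineSet]⟩
    obtain ⟨h1, h2⟩ := hw
    simp only [lineSet, Set.mem_setOf_eq, Matrix.cons_val_zero, Matrix.cons_val_one,
      Matrix.head_cons, Matrix.cons_val_two, Matrix.cons_val_three, Matrix.tail_cons,
      mul_one] at h1 h2
    exact hα0' h1.symm
  · exfalso
    have hw := (hs ![1, α, 0, 0]).mp ⟨by simp [lineSet], by simp [lineSet]⟩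
    obtain ⟨h1, h2⟩ := hw
    simp only [lineSet, Set.mem_setOf_eq, Matrix.cons_val_zero, Matrix.cons_val_one,
      Matrix.head_cons, Matrix.cons_val_two, Matrix.cons_val_three, Matrix.tail_cons,
      mul_one] at h1 h2
    exact hα0' h1.symm
  · exfalso
    have hw := (hs ![1, 0, α, 0]).mp ⟨by simp [lineSet], by simp [lineSet]⟩
    obtain ⟨h1, h2⟩ := hw
    simp only [lineSet, Set.mem_setOf_eq, Matrix.cons_val_zero, Matrix.cons_val_one,
      Matrix.head_cons, Matrix.cons_val_two, Matrix.cons_val_three, Matrix.tail_cons,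
      mul_one] at h1 h2
    exact hα0' h1.symm
  · have hw := (hs ![1, 1, α, β]).mp ⟨by simp [lineSet], by simp [lineSet]⟩
    obtain ⟨h1, h2⟩ := hw
    simp only [lineSet, Set.mem_setOf_eq, Matrix.cons_val_zero, Matrix.cons_val_one,
      Matrix.head_cons, Matrix.cons_val_two, Matrix.cons_val_three, Matrix.tail_cons,
      mul_one] at h1 h2
    subst h1
    subst h2
    rfl
  · exfalso
    have hw := (hs ![1, 0, α, 0]).mp ⟨by simp [lineSet], by simp [lineSet]⟩
    obtain ⟨h1, h2⟩ := hw
    simp only [lineSet, Set.mem_setOf_eq, Matrix.cons_val_zero, Matrix.cons_val_one,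
      Matrix.head_cons, Matrix.cons_val_two, Matrix.cons_val_three, Matrix.tail_cons,
      mul_one] at h1 h2
    exact hα0' h1.symm
  · exfalso
    have hw := (hs ![1, 0, 0, α]).mp ⟨by simp [lineSet], by simp [lineSet]⟩
    obtain ⟨h1, h2⟩ := hw
    simp only [lineSet, Set.mem_setOf_eq, Matrix.cons_val_zero, Matrix.cons_val_one,
      Matrix.head_cons, Matrix.cons_val_two, Matrix.cons_val_three, Matrix.tail_cons,
      mul_one] at h1 h2
    exact hα0' h1.symm
  · exfalso
    have hw := (hs ![1, 0, 0, α]).mp ⟨by simp [lineSet], by simp [lineSet]⟩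
    obtain ⟨h1, h2⟩ := hw
    simp only [lineSet, Set.mem_setOf_eq, Matrix.cons_val_zero, Matrix.cons_val_one,
      Matrix.head_cons, Matrix.cons_val_two, Matrix.cons_val_three, Matrix.tail_cons,
      mul_one] at h1 h2
    exact hα0' h1.symm
  · have hw := (hs ![1, 1, β, α]).mp ⟨by simp [lineSet], by simp [lineSet]⟩
    obtain ⟨h1, h2⟩ := hw
    simp only [lineSet, Set.mem_setOf_eq, Matrix.cons_val_zero, Matrix.cons_val_one,
      Matrix.head_cons, Matrix.cons_val_two, Matrix.cons_val_three, Matrix.tail_cons,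
      mul_one] at h1 h2
    subst h1
    subst h2
    rfl

/-- The Fermat cubic surface contains exactly 27 lines: for each of the three ways of
pairing up the coordinates and each pair of cube roots `α, β` of `-1`, the locus
`{z_j = α z_i, z_l = β z_k}`. -/
theorem fermat_27_lines :
    fermatLines =
      {W : Submodule ℂ (Fin 4 → ℂ) | ∃ α β : ℂ, α ^ 3 = -1 ∧ β ^ 3 = -1 ∧
        ((W : Set (Fin 4 → ℂ)) = {v | v 1 = α * v 0 ∧ v 3 = β * v 2} ∨
          (W : Set (Fin 4 → ℂ)) = {v | v 2 = α * v 0 ∧ v 3 = β * v 1} ∨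
          (W : Set (Fin 4 → ℂ)) = {v | v 3 = α * v 0 ∧ v 2 = β * v 1})} ∧
      fermatLines.ncard = 27 := by
  classical
  have hset : fermatLines =
      {W : Submodule ℂ (Fin 4 → ℂ) | ∃ α β : ℂ, α ^ 3 = -1 ∧ β ^ 3 = -1 ∧
        ((W : Set (Fin 4 → ℂ)) = {v | v 1 = α * v 0 ∧ v 3 = β * v 2} ∨
          (W : Set (Fin 4 → ℂ)) = {v | v 2 = α * v 0 ∧ v 3 = β * v 1} ∨
          (W : Set (Fin 4 → ℂ)) = {v | v 3 = α * v 0 ∧ v 2 = β * v 1})} := by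
    ext W
    constructor
    · rintro ⟨h2, h0⟩
      obtain ⟨α, β, hα, hβ, hc⟩ := forward W h2 h0
      exact ⟨α, β, hα, hβ, hc⟩
    · rintro ⟨α, β, hα, hβ, hEq | hEq | hEq⟩
      · have hW : W = lineSub 0 1 2 3 α β := SetLike.coe_injective hEq
        rw [hW]
        exact lineSub_mem_fermatLines (by decide) (by decide) (by decide) (by decide)
          (by decide) (by decide) (by decide) hα hβ
      · have hW : W = lineSub 0 2 1 3 α β := SetLike.coe_injective hEq
        rw [hW]
        exact lineSub_mem_fermatLines (by decide) (by decide) (by decide) (by decide)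
          (by decide) (by decide) (by decide) hα hβ
      · have hW : W = lineSub 0 3 1 2 α β := SetLike.coe_injective hEq
        rw [hW]
        exact lineSub_mem_fermatLines (by decide) (by decide) (by decide) (by decide)
          (by decide) (by decide) (by decide) hα hβ
  refine ⟨hset, ?_⟩
  have himg : fermatLines = ↑(PP.image lineF) := by
    rw [hset]
    ext W
    simp only [Set.mem_setOf_eq, Finset.coe_image, Set.mem_image, Finset.mem_coe]
    constructor
    · rintro ⟨α, β, hα, hβ, hEq | hEq | hEq⟩
      · exact ⟨(α, β, 0), by simp [PP, mem_RF, hα, hβ],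
          SetLike.coe_injective ((coe_lineF0 α β).trans hEq.symm)⟩
      · exact ⟨(α, β, 1), by simp [PP, mem_RF, hα, hβ],
          SetLike.coe_injective ((coe_lineF1 α β).trans hEq.symm)⟩
      · exact ⟨(α, β, 2), by simp [PP, mem_RF, hα, hβ],
          SetLike.coe_injective ((coe_lineF2 α β).trans hEq.symm)⟩
    · rintro ⟨⟨α, β, t⟩, hmem, rfl⟩
      simp only [PP, Finset.mem_product, mem_RF, Finset.mem_univ, and_true] at hmem
      obtain ⟨hα, hβ⟩ := hmem
      fin_cases t <;>
        simp only [Fin.mk_zero, Fin.mk_one, show (⟨2, by omega⟩ : Fin 3) = 2 from rfl]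
      · exact ⟨α, β, hα, hβ, Or.inl (coe_lineF0 α β)⟩
      · exact ⟨α, β, hα, hβ, Or.inr (Or.inl (coe_lineF1 α β))⟩
      · exact ⟨α, β, hα, hβ, Or.inr (Or.inr (coe_lineF2 α β))⟩
  rw [himg, Set.ncard_coe_finset, Finset.card_image_of_injOn injOn_lineF, card_PP]
end

section
/- Let $S_4 \le S_{27}$ be the subgroup generated by the permutations $a = (3,4)(5,11)(6,12)(7,9)(8,10)(13,15)(14,16)(17,21)(18,23)(19,22)(20,24)(26,27)$ and $b = (1,11,3,10)(2,12,4,9)(5,8,6,7)(13,23)(14,24,15,21)(16,22)(17,18,20,19)(25,27)$. Then this subgroup is isomorphic to the symmetric group $S_4$ (it has order $24$), and its orbits on $\{1,\dots,27\}$ are $\{1,\dots,12\}$, $\{13,\dots,24\}$, and $\{25,26,27\}$, with point stabilizers of orders $2$, $2$, and $8$ respectively. -/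
set_option maxRecDepth 100000
set_option maxHeartbeats 8000000

open Equiv

/-- Permutation of the 27 lines of the Fermat cubic induced by the transposition
`(z₂ z₃)` of coordinates. -/
def a : Equiv.Perm ℕ :=
  c[3, 4] * c[5, 11] * c[6, 12] * c[7, 9] * c[8, 10] * c[13, 15] * c[14, 16] *
    c[17, 21] * c[18, 23] * c[19, 22] * c[20, 24] * c[26, 27]

/-- Permutation of the 27 lines of the Fermat cubic induced by a 4-cycle of the
coordinates. -/
def b : Equiv.Perm ℕ :=
  c[1, 11, 3, 10] * c[2, 12, 4, 9] * c[5, 8, 6, 7] * c[13, 23] * c[14, 24, 15, 21] *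
    c[16, 22] * c[17, 18, 20, 19] * c[25, 27]

def mk4 (l l' : List (Fin 4))
    (h1 : Function.LeftInverse (fun i : Fin 4 => l'.getD i 0) (fun i : Fin 4 => l.getD i 0) :=
      by decide)
    (h2 : Function.RightInverse (fun i : Fin 4 => l'.getD i 0) (fun i : Fin 4 => l.getD i 0) :=
      by decide) :
    Perm (Fin 4) := ⟨fun i => l.getD i 0, fun i => l'.getD i 0, h1, h2⟩

def mk28 (l l' : List (Fin 28))
    (h1 : Function.LeftInverse (fun i : Fin 28 => l'.getD i 0) (fun i : Fin 28 => l.getD i 0) :=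
      by decide)
    (h2 : Function.RightInverse (fun i : Fin 28 => l'.getD i 0) (fun i : Fin 28 => l.getD i 0) :=
      by decide) :
    Perm (Fin 28) := ⟨fun i => l.getD i 0, fun i => l'.getD i 0, h1, h2⟩

def tbl : List (Perm (Fin 4) × Perm (Fin 28)) :=
  [
  (mk4 [(0 : Fin 4), 1, 2, 3] [(0 : Fin 4), 1, 2, 3], mk28 [(0 : Fin 28), 1, 2, 3, 4, 5, 6, 7, 8, 9, 10, 11, 12, 13, 14, 15, 16, 17, 18, 19, 20, 21, 22, 23, 24, 25, 26, 27] [(0 : Fin 28), 1, 2, 3, 4, 5, 6, 7, 8, 9, 10, 11, 12, 13, 14, 15, 16, 17, 18, 19, 20, 21, 22, 23, 24, 25, 26, 27]),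
  (mk4 [(1 : Fin 4), 0, 2, 3] [(1 : Fin 4), 0, 2, 3], mk28 [(0 : Fin 28), 1, 2, 4, 3, 11, 12, 9, 10, 7, 8, 5, 6, 15, 16, 13, 14, 21, 23, 22, 24, 17, 19, 18, 20, 25, 27, 26] [(0 : Fin 28), 1, 2, 4, 3, 11, 12, 9, 10, 7, 8, 5, 6, 15, 16, 13, 14, 21, 23, 22, 24, 17, 19, 18, 20, 25, 27, 26]),
  (mk4 [(1 : Fin 4), 2, 3, 0] [(3 : Fin 4), 0, 1, 2], mk28 [(0 : Fin 28), 11, 12, 10, 9, 8, 7, 5, 6, 2, 1, 3, 4, 23, 24, 21, 22, 18, 20, 17, 19, 14, 16, 13, 15, 27, 26, 25] [(0 : Fin 28), 10, 9, 11, 12, 7, 8, 6, 5, 4, 3, 1, 2, 23, 21, 24, 22, 19, 17, 20, 18, 15, 16, 13, 14, 27, 26, 25]),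
  (mk4 [(0 : Fin 4), 2, 3, 1] [(0 : Fin 4), 3, 1, 2], mk28 [(0 : Fin 28), 5, 6, 8, 7, 10, 9, 11, 12, 2, 1, 4, 3, 18, 20, 17, 19, 23, 24, 21, 22, 16, 14, 15, 13, 26, 27, 25] [(0 : Fin 28), 10, 9, 12, 11, 1, 2, 4, 3, 6, 5, 7, 8, 24, 22, 23, 21, 15, 13, 16, 14, 19, 20, 17, 18, 27, 25, 26]),
  (mk4 [(2 : Fin 4), 1, 3, 0] [(3 : Fin 4), 1, 0, 2], mk28 [(0 : Fin 28), 11, 12, 9, 10, 3, 4, 2, 1, 5, 6, 8, 7, 21, 22, 23, 24, 14, 13, 16, 15, 18, 17, 20, 19, 27, 25, 26] [(0 : Fin 28), 8, 7, 5, 6, 9, 10, 12, 11, 3, 4, 1, 2, 18, 17, 20, 19, 22, 21, 24, 23, 13, 14, 15, 16, 26, 27, 25]),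
  (mk4 [(2 : Fin 4), 3, 0, 1] [(2 : Fin 4), 3, 0, 1], mk28 [(0 : Fin 28), 3, 4, 1, 2, 6, 5, 8, 7, 12, 11, 10, 9, 13, 15, 14, 16, 20, 19, 18, 17, 24, 22, 23, 21, 25, 26, 27] [(0 : Fin 28), 3, 4, 1, 2, 6, 5, 8, 7, 12, 11, 10, 9, 13, 15, 14, 16, 20, 19, 18, 17, 24, 22, 23, 21, 25, 26, 27]),
  (mk4 [(2 : Fin 4), 0, 3, 1] [(1 : Fin 4), 3, 0, 2], mk28 [(0 : Fin 28), 5, 6, 7, 8, 4, 3, 2, 1, 11, 12, 10, 9, 17, 19, 18, 20, 16, 15, 14, 13, 23, 21, 24, 22, 26, 25, 27] [(0 : Fin 28), 8, 7, 6, 5, 1, 2, 3, 4, 12, 11, 9, 10, 20, 19, 18, 17, 13, 15, 14, 16, 22, 24, 21, 23, 26, 25, 27]),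
  (mk4 [(2 : Fin 4), 3, 1, 0] [(3 : Fin 4), 2, 0, 1], mk28 [(0 : Fin 28), 4, 3, 1, 2, 12, 11, 10, 9, 6, 5, 8, 7, 15, 13, 16, 14, 24, 22, 23, 21, 20, 19, 18, 17, 25, 27, 26] [(0 : Fin 28), 3, 4, 2, 1, 10, 9, 12, 11, 8, 7, 6, 5, 14, 16, 13, 15, 24, 23, 22, 21, 20, 18, 19, 17, 25, 27, 26]),
  (mk4 [(1 : Fin 4), 3, 0, 2] [(2 : Fin 4), 0, 3, 1], mk28 [(0 : Fin 28), 8, 7, 6, 5, 1, 2, 3, 4, 12, 11, 9, 10, 20, 19, 18, 17, 13, 15, 14, 16, 22, 24, 21, 23, 26, 25, 27] [(0 : Fin 28), 5, 6, 7, 8, 4, 3, 2, 1, 11, 12, 10, 9, 17, 19, 18, 20, 16, 15, 14, 13, 23, 21, 24, 22, 26, 25, 27]),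
  (mk4 [(3 : Fin 4), 2, 0, 1] [(2 : Fin 4), 3, 1, 0], mk28 [(0 : Fin 28), 3, 4, 2, 1, 10, 9, 12, 11, 8, 7, 6, 5, 14, 16, 13, 15, 24, 23, 22, 21, 20, 18, 19, 17, 25, 27, 26] [(0 : Fin 28), 4, 3, 1, 2, 12, 11, 10, 9, 6, 5, 8, 7, 15, 13, 16, 14, 24, 22, 23, 21, 20, 19, 18, 17, 25, 27, 26]),
  (mk4 [(3 : Fin 4), 0, 1, 2] [(1 : Fin 4), 2, 3, 0], mk28 [(0 : Fin 28), 10, 9, 11, 12, 7, 8, 6, 5, 4, 3, 1, 2, 23, 21, 24, 22, 19, 17, 20, 18, 15, 16, 13, 14, 27, 26, 25] [(0 : Fin 28), 11, 12, 10, 9, 8, 7, 5, 6, 2, 1, 3, 4, 23, 24, 21, 22, 18, 20, 17, 19, 14, 16, 13, 15, 27, 26, 25]),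
  (mk4 [(0 : Fin 4), 3, 1, 2] [(0 : Fin 4), 2, 3, 1], mk28 [(0 : Fin 28), 10, 9, 12, 11, 1, 2, 4, 3, 6, 5, 7, 8, 24, 22, 23, 21, 15, 13, 16, 14, 19, 20, 17, 18, 27, 25, 26] [(0 : Fin 28), 5, 6, 8, 7, 10, 9, 11, 12, 2, 1, 4, 3, 18, 20, 17, 19, 23, 24, 21, 22, 16, 14, 15, 13, 26, 27, 25]),
  (mk4 [(3 : Fin 4), 2, 1, 0] [(3 : Fin 4), 2, 1, 0], mk28 [(0 : Fin 28), 4, 3, 2, 1, 8, 7, 6, 5, 10, 9, 12, 11, 16, 14, 15, 13, 20, 18, 19, 17, 24, 23, 22, 21, 25, 26, 27] [(0 : Fin 28), 4, 3, 2, 1, 8, 7, 6, 5, 10, 9, 12, 11, 16, 14, 15, 13, 20, 18, 19, 17, 24, 23, 22, 21, 25, 26, 27]),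
  (mk4 [(3 : Fin 4), 1, 0, 2] [(2 : Fin 4), 1, 3, 0], mk28 [(0 : Fin 28), 8, 7, 5, 6, 9, 10, 12, 11, 3, 4, 1, 2, 18, 17, 20, 19, 22, 21, 24, 23, 13, 14, 15, 16, 26, 27, 25] [(0 : Fin 28), 11, 12, 9, 10, 3, 4, 2, 1, 5, 6, 8, 7, 21, 22, 23, 24, 14, 13, 16, 15, 18, 17, 20, 19, 27, 25, 26]),
  (mk4 [(3 : Fin 4), 0, 2, 1] [(1 : Fin 4), 3, 2, 0], mk28 [(0 : Fin 28), 9, 10, 11, 12, 4, 3, 1, 2, 7, 8, 6, 5, 21, 23, 22, 24, 15, 16, 13, 14, 19, 17, 20, 18, 27, 25, 26] [(0 : Fin 28), 7, 8, 6, 5, 12, 11, 9, 10, 1, 2, 3, 4, 19, 20, 17, 18, 22, 24, 21, 23, 13, 15, 14, 16, 26, 27, 25]),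
  (mk4 [(2 : Fin 4), 0, 1, 3] [(1 : Fin 4), 2, 0, 3], mk28 [(0 : Fin 28), 6, 5, 7, 8, 11, 12, 10, 9, 4, 3, 2, 1, 19, 17, 20, 18, 23, 21, 24, 22, 16, 15, 14, 13, 26, 27, 25] [(0 : Fin 28), 12, 11, 10, 9, 2, 1, 3, 4, 8, 7, 5, 6, 24, 23, 22, 21, 14, 16, 13, 15, 18, 20, 17, 19, 27, 25, 26]),
  (mk4 [(3 : Fin 4), 1, 2, 0] [(3 : Fin 4), 1, 2, 0], mk28 [(0 : Fin 28), 7, 8, 5, 6, 3, 4, 1, 2, 9, 10, 12, 11, 17, 18, 19, 20, 13, 14, 15, 16, 22, 21, 24, 23, 26, 25, 27] [(0 : Fin 28), 7, 8, 5, 6, 3, 4, 1, 2, 9, 10, 12, 11, 17, 18, 19, 20, 13, 14, 15, 16, 22, 21, 24, 23, 26, 25, 27]),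
  (mk4 [(2 : Fin 4), 1, 0, 3] [(2 : Fin 4), 1, 0, 3], mk28 [(0 : Fin 28), 12, 11, 9, 10, 5, 6, 8, 7, 3, 4, 2, 1, 22, 21, 24, 23, 18, 17, 20, 19, 14, 13, 16, 15, 27, 26, 25] [(0 : Fin 28), 12, 11, 9, 10, 5, 6, 8, 7, 3, 4, 2, 1, 22, 21, 24, 23, 18, 17, 20, 19, 14, 13, 16, 15, 27, 26, 25]),
  (mk4 [(0 : Fin 4), 3, 2, 1] [(0 : Fin 4), 3, 2, 1], mk28 [(0 : Fin 28), 9, 10, 12, 11, 6, 5, 7, 8, 1, 2, 4, 3, 22, 24, 21, 23, 19, 20, 17, 18, 15, 13, 16, 14, 27, 26, 25] [(0 : Fin 28), 9, 10, 12, 11, 6, 5, 7, 8, 1, 2, 4, 3, 22, 24, 21, 23, 19, 20, 17, 18, 15, 13, 16, 14, 27, 26, 25]),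
  (mk4 [(0 : Fin 4), 2, 1, 3] [(0 : Fin 4), 2, 1, 3], mk28 [(0 : Fin 28), 6, 5, 8, 7, 2, 1, 4, 3, 10, 9, 11, 12, 20, 18, 19, 17, 16, 14, 15, 13, 23, 24, 21, 22, 26, 25, 27] [(0 : Fin 28), 6, 5, 8, 7, 2, 1, 4, 3, 10, 9, 11, 12, 20, 18, 19, 17, 16, 14, 15, 13, 23, 24, 21, 22, 26, 25, 27]),
  (mk4 [(0 : Fin 4), 1, 3, 2] [(0 : Fin 4), 1, 3, 2], mk28 [(0 : Fin 28), 2, 1, 3, 4, 9, 10, 11, 12, 5, 6, 7, 8, 14, 13, 16, 15, 21, 22, 23, 24, 17, 18, 19, 20, 25, 27, 26] [(0 : Fin 28), 2, 1, 3, 4, 9, 10, 11, 12, 5, 6, 7, 8, 14, 13, 16, 15, 21, 22, 23, 24, 17, 18, 19, 20, 25, 27, 26]),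
  (mk4 [(1 : Fin 4), 3, 2, 0] [(3 : Fin 4), 0, 2, 1], mk28 [(0 : Fin 28), 7, 8, 6, 5, 12, 11, 9, 10, 1, 2, 3, 4, 19, 20, 17, 18, 22, 24, 21, 23, 13, 15, 14, 16, 26, 27, 25] [(0 : Fin 28), 9, 10, 11, 12, 4, 3, 1, 2, 7, 8, 6, 5, 21, 23, 22, 24, 15, 16, 13, 14, 19, 17, 20, 18, 27, 25, 26]),
  (mk4 [(1 : Fin 4), 2, 0, 3] [(2 : Fin 4), 0, 1, 3], mk28 [(0 : Fin 28), 12, 11, 10, 9, 2, 1, 3, 4, 8, 7, 5, 6, 24, 23, 22, 21, 14, 16, 13, 15, 18, 20, 17, 19, 27, 25, 26] [(0 : Fin 28), 6, 5, 7, 8, 11, 12, 10, 9, 4, 3, 2, 1, 19, 17, 20, 18, 23, 21, 24, 22, 16, 15, 14, 13, 26, 27, 25]),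
  (mk4 [(1 : Fin 4), 0, 3, 2] [(1 : Fin 4), 0, 3, 2], mk28 [(0 : Fin 28), 2, 1, 4, 3, 7, 8, 5, 6, 11, 12, 9, 10, 16, 15, 14, 13, 17, 19, 18, 20, 21, 23, 22, 24, 25, 26, 27] [(0 : Fin 28), 2, 1, 4, 3, 7, 8, 5, 6, 11, 12, 9, 10, 16, 15, 14, 13, 17, 19, 18, 20, 21, 23, 22, 24, 25, 26, 27])]


def psi0 (σ : Perm (Fin 4)) : Perm (Fin 28) := (tbl.lookup σ).getD 1

lemma psi0_mul : ∀ σ τ : Perm (Fin 4), psi0 (σ * τ) = psi0 σ * psi0 τ := by decide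

lemma psi0_inj : Function.Injective psi0 := by decide

def psi0h : Perm (Fin 4) →* Perm (Fin 28) := MonoidHom.mk' psi0 psi0_mul

def ι : Fin 28 ↪ ℕ := ⟨Fin.val, Fin.val_injective⟩

noncomputable def ψ : Perm (Fin 4) →* Perm ℕ := (Equiv.Perm.viaEmbeddingHom ι).comp psi0h

lemma ψ_inj : Function.Injective ψ :=
  (Equiv.Perm.viaEmbeddingHom_injective ι).comp psi0_inj

def s : Perm (Fin 4) := c[0, 1]
def t : Perm (Fin 4) := c[0, 1, 2, 3]

lemma afix (n : ℕ) (hn : 28 ≤ n) : a n = n := by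
  simp only [a, Perm.mul_apply, Cycle.formPerm_coe]
  erw [Cycle.formPerm_coe, Cycle.formPerm_coe, Cycle.formPerm_coe, Cycle.formPerm_coe, Cycle.formPerm_coe, Cycle.formPerm_coe, Cycle.formPerm_coe, Cycle.formPerm_coe, Cycle.formPerm_coe, Cycle.formPerm_coe, Cycle.formPerm_coe, Cycle.formPerm_coe]
  rw [List.formPerm_apply_of_notMem (l := [26, 27]) (by simp; omega)]
  rw [List.formPerm_apply_of_notMem (l := [20, 24]) (by simp; omega)]
  rw [List.formPerm_apply_of_notMem (l := [19, 22]) (by simp; omega)]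
  rw [List.formPerm_apply_of_notMem (l := [18, 23]) (by simp; omega)]
  rw [List.formPerm_apply_of_notMem (l := [17, 21]) (by simp; omega)]
  rw [List.formPerm_apply_of_notMem (l := [14, 16]) (by simp; omega)]
  rw [List.formPerm_apply_of_notMem (l := [13, 15]) (by simp; omega)]
  rw [List.formPerm_apply_of_notMem (l := [8, 10]) (by simp; omega)]
  rw [List.formPerm_apply_of_notMem (l := [7, 9]) (by simp; omega)]
  rw [List.formPerm_apply_of_notMem (l := [6, 12]) (by simp; omega)]
  rw [List.formPerm_apply_of_notMem (l := [5, 11]) (by simp; omega)]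
  rw [List.formPerm_apply_of_notMem (l := [3, 4]) (by simp; omega)]

lemma bfix (n : ℕ) (hn : 28 ≤ n) : b n = n := by
  simp only [b, Perm.mul_apply, Cycle.formPerm_coe]
  erw [Cycle.formPerm_coe, Cycle.formPerm_coe, Cycle.formPerm_coe, Cycle.formPerm_coe, Cycle.formPerm_coe, Cycle.formPerm_coe, Cycle.formPerm_coe, Cycle.formPerm_coe]
  rw [List.formPerm_apply_of_notMem (l := [25, 27]) (by simp; omega)]
  rw [List.formPerm_apply_of_notMem (l := [17, 18, 20, 19]) (by simp; omega)]
  rw [List.formPerm_apply_of_notMem (l := [16, 22]) (by simp; omega)]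
  rw [List.formPerm_apply_of_notMem (l := [14, 24, 15, 21]) (by simp; omega)]
  rw [List.formPerm_apply_of_notMem (l := [13, 23]) (by simp; omega)]
  rw [List.formPerm_apply_of_notMem (l := [5, 8, 6, 7]) (by simp; omega)]
  rw [List.formPerm_apply_of_notMem (l := [2, 12, 4, 9]) (by simp; omega)]
  rw [List.formPerm_apply_of_notMem (l := [1, 11, 3, 10]) (by simp; omega)]

lemma psi_spec (σ : Perm (Fin 4)) (p : Perm ℕ)
    (h1 : ∀ m : Fin 28, ((psi0 σ) m : ℕ) = p (m : ℕ))
    (h2 : ∀ n : ℕ, 28 ≤ n → p n = n) : ψ σ = p := by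
  ext n
  show (psi0h σ).viaEmbedding ι n = p n
  by_cases h : n < 28
  · have hn : n = ι ⟨n, h⟩ := rfl
    rw [hn, Equiv.Perm.viaEmbedding_apply]
    exact h1 ⟨n, h⟩
  · rw [Equiv.Perm.viaEmbedding_apply_of_notMem, h2 n (by omega)]
    rintro ⟨m, hm⟩
    exact h (hm ▸ m.isLt)

lemma psi_s : ψ s = a := psi_spec s a (by decide) afix
lemma psi_t : ψ t = b := psi_spec t b (by decide) bfix

lemma closure_st : Subgroup.closure ({t, s} : Set (Perm (Fin 4))) = ⊤ := by
  have h1 : t.IsCycle := by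
    have : ([(0 : Fin 4), 1, 2, 3].formPerm).IsCycle :=
      List.isCycle_formPerm (by decide) (by decide)
    exact this
  have h2 : t.support = Finset.univ := by decide
  have h3 : Equiv.swap (0 : Fin 4) (t 0) = s := by decide
  rw [← h3]
  exact Equiv.Perm.closure_cycle_adjacent_swap h1 h2 0

lemma range_eq : ψ.range = Subgroup.closure ({a, b} : Set (Perm ℕ)) := by
  rw [MonoidHom.range_eq_map, ← closure_st, MonoidHom.map_closure]
  congr 1
  rw [Set.image_insert_eq, Set.image_singleton, psi_s, psi_t]
  ext x; simp [or_comm]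

lemma card24 : Nat.card (Subgroup.closure {a, b} : Subgroup (Equiv.Perm ℕ)) = 24 := by
  rw [← range_eq]
  have h : Nat.card ψ.range = Nat.card (Perm (Fin 4)) :=
    Nat.card_congr (Equiv.ofInjective ψ ψ_inj).symm
  rw [h, Nat.card_eq_fintype_card, Fintype.card_perm]
  decide

noncomputable def theIso :
    (Subgroup.closure {a, b} : Subgroup (Equiv.Perm ℕ)) ≃* Perm (Fin 4) :=
  (MulEquiv.subgroupCongr range_eq.symm).trans (MonoidHom.ofInjective ψ_inj).symm

lemma mem_orbit_iff (x : ℕ) (n : ℕ) :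
    n ∈ MulAction.orbit (Subgroup.closure {a, b} : Subgroup (Equiv.Perm ℕ)) x ↔
      ∃ σ : Perm (Fin 4), ψ σ x = n := by
  rw [← range_eq]
  constructor
  · rintro ⟨⟨g, hg⟩, rfl⟩
    obtain ⟨σ, rfl⟩ := hg
    exact ⟨σ, rfl⟩
  · rintro ⟨σ, rfl⟩
    exact ⟨⟨ψ σ, σ, rfl⟩, rfl⟩

lemma psi_apply_lt (σ : Perm (Fin 4)) (x : Fin 28) : ψ σ (x : ℕ) = ((psi0 σ) x : ℕ) := by
  show (psi0h σ).viaEmbedding ι (ι x) = _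
  rw [Equiv.Perm.viaEmbedding_apply]; rfl

lemma orbit_eval (x : Fin 28) (P : ℕ → Prop) [DecidablePred P]
    (hP : ∀ n, P n → n < 28)
    (hdec : ∀ m : Fin 28, (∃ σ : Perm (Fin 4), psi0 σ x = m) ↔ P (m : ℕ)) (n : ℕ) :
    (∃ σ : Perm (Fin 4), ψ σ (x : ℕ) = n) ↔ P n := by
  constructor
  · rintro ⟨σ, rfl⟩
    rw [psi_apply_lt]
    exact (hdec _).mp ⟨σ, rfl⟩
  · intro hn
    obtain ⟨σ, hσ⟩ := (hdec ⟨n, hP n hn⟩).mpr hn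
    exact ⟨σ, by rw [psi_apply_lt, hσ]⟩

lemma orbit1 : MulAction.orbit (Subgroup.closure {a, b} : Subgroup (Equiv.Perm ℕ)) (1 : ℕ) =
    Set.Icc 1 12 := by
  ext n
  rw [mem_orbit_iff]
  have h := orbit_eval (⟨1, by norm_num⟩ : Fin 28) (fun n => 1 ≤ n ∧ n ≤ 12)
    (fun n hn => by omega) (by decide) n
  simpa [Set.mem_Icc] using h

lemma orbit13 : MulAction.orbit (Subgroup.closure {a, b} : Subgroup (Equiv.Perm ℕ)) (13 : ℕ) =
    Set.Icc 13 24 := by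
  ext n
  rw [mem_orbit_iff]
  have h := orbit_eval (⟨13, by norm_num⟩ : Fin 28) (fun n => 13 ≤ n ∧ n ≤ 24)
    (fun n hn => by omega) (by decide) n
  simpa [Set.mem_Icc] using h

lemma orbit25 : MulAction.orbit (Subgroup.closure {a, b} : Subgroup (Equiv.Perm ℕ)) (25 : ℕ) =
    {25, 26, 27} := by
  ext n
  rw [mem_orbit_iff]
  have h := orbit_eval (⟨25, by norm_num⟩ : Fin 28) (fun n => n = 25 ∨ n = 26 ∨ n = 27)
    (fun n hn => by omega) (by decide) n
  simpa using h

lemma stab_card (x : ℕ) (k : ℕ) (hk : Nat.card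
      (MulAction.orbit (Subgroup.closure {a, b} : Subgroup (Equiv.Perm ℕ)) x) = k)
    (hkpos : 0 < k) (m : ℕ) (hm : k * m = 24) :
    Nat.card
      (MulAction.stabilizer (Subgroup.closure {a, b} : Subgroup (Equiv.Perm ℕ)) x) = m := by
  have h := Nat.card_congr
    (MulAction.orbitProdStabilizerEquivGroup
      (Subgroup.closure {a, b} : Subgroup (Equiv.Perm ℕ)) x)
  rw [Nat.card_prod, hk, card24] at h
  exact Nat.eq_of_mul_eq_mul_left hkpos (h.trans hm.symm)

/-- The subgroup of `S₂₇` generated by `a` and `b` is isomorphic to `S₄` (of order 24),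
with orbits `{1,…,12}`, `{13,…,24}`, `{25,26,27}` on the 27 lines, whose point
stabilizers have orders `2`, `2`, `8` respectively. -/
theorem S4_on_27_lines :
    Nat.card (Subgroup.closure {a, b} : Subgroup (Equiv.Perm ℕ)) = 24 ∧
      Nonempty ((Subgroup.closure {a, b} : Subgroup (Equiv.Perm ℕ)) ≃* Equiv.Perm (Fin 4)) ∧
      MulAction.orbit (Subgroup.closure {a, b} : Subgroup (Equiv.Perm ℕ)) (1 : ℕ) =
        Set.Icc 1 12 ∧
      MulAction.orbit (Subgroup.closure {a, b} : Subgroup (Equiv.Perm ℕ)) (13 : ℕ) =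
        Set.Icc 13 24 ∧
      MulAction.orbit (Subgroup.closure {a, b} : Subgroup (Equiv.Perm ℕ)) (25 : ℕ) =
        {25, 26, 27} ∧
      Nat.card (MulAction.stabilizer
        (Subgroup.closure {a, b} : Subgroup (Equiv.Perm ℕ)) (1 : ℕ)) = 2 ∧
      Nat.card (MulAction.stabilizer
        (Subgroup.closure {a, b} : Subgroup (Equiv.Perm ℕ)) (13 : ℕ)) = 2 ∧
      Nat.card (MulAction.stabilizer
        (Subgroup.closure {a, b} : Subgroup (Equiv.Perm ℕ)) (25 : ℕ)) = 8 := by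
  refine ⟨card24, ⟨theIso⟩, orbit1, orbit13, orbit25, ?_, ?_, ?_⟩
  · refine stab_card 1 12 ?_ (by norm_num) 2 (by norm_num)
    rw [orbit1, Nat.card_coe_set_eq, ← Finset.coe_Icc, Set.ncard_coe_finset]
    decide
  · refine stab_card 13 12 ?_ (by norm_num) 2 (by norm_num)
    rw [orbit13, Nat.card_coe_set_eq, ← Finset.coe_Icc, Set.ncard_coe_finset]
    decide
  · refine stab_card 25 3 ?_ (by norm_num) 8 (by norm_num)
    rw [orbit25, show ({25, 26, 27} : Set ℕ) = (↑({25, 26, 27} : Finset ℕ) : Set ℕ) by simp,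
      Nat.card_coe_set_eq, Set.ncard_coe_finset]
    decide
end
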